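/- Assume X is functorially finite in C and τX = X. Then (C, C) is an X-mutation pair: for every object A of C there is a distinguished triangle A → X₀ → B → A⟦1⟧ with X₀ in X whose first morphism is a left X-approximation of A and whose second morphism is a right X-approximation of B, and for every object B of C there is such a distinguished triangle A → X₀ → B → A⟦1⟧ ending at B. -/

import Mathlib

/-!
Complete a left `X`-approximation `α : A ⟶ X₀` to a triangle `A ⟶ X₀ ⟶ B ⟶ A⟦1⟧`
(and dually a right approximation `β : X₀ ⟶ B` to a triangle ending at `B`). The only
issue is that the other map of the triangle is again an approximation, i.e. that the
connecting morphism is killed by all maps from (resp. to) objects of `X`. Under the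
Serre duality `Hom(A, B⟦1⟧) ≅ D Hom(B, τA)` such a composite pairs with a morphism
into `τX`; as `τX = X`, that morphism factors through the approximation, and the
pairing vanishes because consecutive maps in a triangle compose to zero.
-/

open CategoryTheory Category Limits Pretriangulated

universe v u

namespace PaperStmt

variable {C : Type u} [Category.{v} C]

/-- `f` factors through an object of `X`. -/
def FactorsThru (X : Set C) {A B : C} (f : A ⟶ B) : Prop :=
  ∃ (M : C) (g : A ⟶ M) (h : M ⟶ B), M ∈ X ∧ g ≫ h = f

/-- `f : A ⟶ B` is `X`-monic: the map `Hom(B, X') → Hom(A, X')`, `g ↦ g ∘ f`,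
is surjective for every object `X'` of `X`. -/
def IsXMonic (X : Set C) {A B : C} (f : A ⟶ B) : Prop :=
  ∀ ⦃X' : C⦄, X' ∈ X → ∀ g : A ⟶ X', ∃ h : B ⟶ X', f ≫ h = g

/-- `f : A ⟶ B` is `X`-epic: the map `Hom(X', A) → Hom(X', B)`, `g ↦ f ∘ g`,
is surjective for every object `X'` of `X`. -/
def IsXEpic (X : Set C) {A B : C} (f : A ⟶ B) : Prop :=
  ∀ ⦃X' : C⦄, X' ∈ X → ∀ g : X' ⟶ B, ∃ h : X' ⟶ A, h ≫ f = g

/-- `α : A ⟶ X₀` is a left `X`-approximation of `A`: `X₀` lies in `X` and every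
morphism from `A` to an object of `X` factors through `α`. -/
def IsLeftApprox (X : Set C) {A X₀ : C} (α : A ⟶ X₀) : Prop :=
  X₀ ∈ X ∧ IsXMonic X α

/-- `β : X₀ ⟶ B` is a right `X`-approximation of `B`: `X₀` lies in `X` and every
morphism from an object of `X` to `B` factors through `β`. -/
def IsRightApprox (X : Set C) {X₀ B : C} (β : X₀ ⟶ B) : Prop :=
  X₀ ∈ X ∧ IsXEpic X β

/-- `X` is (the object class of) a full additive subcategory of `C`, closed
under isomorphisms, finite direct sums and direct summands. -/
structure IsAdditiveClosedSubcat [Preadditive C] [HasBinaryBiproducts C] (X : Set C) :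
    Prop where
  zero_mem : ∀ Z : C, IsZero Z → Z ∈ X
  iso_closed : ∀ {A B : C}, (A ≅ B) → A ∈ X → B ∈ X
  sum_closed : ∀ {A B : C}, A ∈ X → B ∈ X → (A ⊞ B) ∈ X
  summand_closed : ∀ {A B : C}, (A ⊞ B) ∈ X → A ∈ X

/-- Two morphisms are identified in the quotient category `C/X` precisely when
their difference factors through an object of `X`. -/
def xRel [Preadditive C] (X : Set C) : HomRel C :=
  fun _ _ f g => FactorsThru X (f - g)

section Triangulated

variable [Preadditive C] [HasZeroObject C] [HasShift C ℤ]
  [∀ n : ℤ, (shiftFunctor C n).Additive] [Pretriangulated C]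

/-- `(𝒜, ℬ)` is an `X`-mutation pair in the triangulated category `C`. -/
def IsMutationPair (X 𝒜 ℬ : Set C) : Prop :=
  X ⊆ 𝒜 ∧ X ⊆ ℬ ∧
  (∀ A ∈ 𝒜, ∃ (X₀ B' : C) (α : A ⟶ X₀) (β : X₀ ⟶ B') (δ : B' ⟶ A⟦(1 : ℤ)⟧),
      B' ∈ ℬ ∧ (Triangle.mk α β δ ∈ distTriang C) ∧
      IsLeftApprox X α ∧ IsRightApprox X β) ∧
  (∀ B ∈ ℬ, ∃ (A' X₀ : C) (α : A' ⟶ X₀) (β : X₀ ⟶ B) (δ : B ⟶ A'⟦(1 : ℤ)⟧),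
      A' ∈ 𝒜 ∧ (Triangle.mk α β δ ∈ distTriang C) ∧
      IsLeftApprox X α ∧ IsRightApprox X β)

end Triangulated

section SerreDuality

variable [Preadditive C] [HasShift C ℤ] {k : Type*} [CommSemiring k] [Linear k C]
  {τ : C ⥤ C} (e : ∀ A B : C, (A ⟶ (B⟦(1 : ℤ)⟧)) ≃ₗ[k] ((B ⟶ τ.obj A) →ₗ[k] k))

lemma eq_zero_of_comp_shift_map_eq_zero
    (he₂ : ∀ {A B B' : C} (h : B ⟶ B') (φ : A ⟶ (B⟦(1 : ℤ)⟧)) (g : B' ⟶ τ.obj A),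
      e A B' (φ ≫ (h⟦(1 : ℤ)⟧')) g = e A B φ (h ≫ g))
    {Y A Z : C} {ψ : Y ⟶ A⟦(1 : ℤ)⟧} {α : A ⟶ Z} (hψ : ψ ≫ α⟦(1 : ℤ)⟧' = 0)
    (hα : ∀ g : A ⟶ τ.obj Y, ∃ h, α ≫ h = g) : ψ = 0 := by
  apply (e Y A).injective
  ext g
  obtain ⟨h, rfl⟩ := hα g
  rw [← he₂, hψ]
  simp

lemma eq_zero_of_comp_eq_zero
    (he₁ : ∀ {A' A B : C} (f : A' ⟶ A) (φ : A ⟶ (B⟦(1 : ℤ)⟧)) (g : B ⟶ τ.obj A'),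
      e A' B (f ≫ φ) g = e A B φ (g ≫ τ.map f))
    {Z B Y : C} {ψ : B ⟶ Y⟦(1 : ℤ)⟧} {β : Z ⟶ B} (hψ : β ≫ ψ = 0)
    (hβ : ∀ g : Y ⟶ τ.obj B, ∃ h, h ≫ τ.map β = g) : ψ = 0 := by
  apply (e B Y).injective
  ext g
  obtain ⟨h, rfl⟩ := hβ g
  rw [← he₁, hψ]
  simp

end SerreDuality

lemma IsXEpic.map {D : Type*} [Category D] {X : Set C} {X' : Set D} (F : C ⥤ D) [F.Full]
    (hF : ∀ Y' ∈ X', ∃ Y ∈ X, Nonempty (F.obj Y ≅ Y')) {Z B : C} {β : Z ⟶ B}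
    (hβ : IsXEpic X β) : IsXEpic X' (F.map β) := by
  intro Y' hY' g
  obtain ⟨Y, hY, ⟨i⟩⟩ := hF Y' hY'
  obtain ⟨u, hu⟩ := hβ hY (F.preimage (i.hom ≫ g))
  exact ⟨i.inv ≫ F.map u, by rw [assoc, ← F.map_comp, hu, F.map_preimage, Iso.inv_hom_id_assoc]⟩

section Triangulated

variable [Preadditive C] [HasZeroObject C] [HasShift C ℤ]
  [∀ n : ℤ, (shiftFunctor C n).Additive] [Pretriangulated C]

lemma Triangle.yoneda_exact₁ (T : Triangle C) (hT : T ∈ distTriang C) {Y : C}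
    (f : T.obj₁ ⟶ Y) (hf : T.mor₃ ≫ f⟦(1 : ℤ)⟧' = 0) : ∃ g, f = T.mor₁ ≫ g := by
  refine Triangle.yoneda_exact₂ _ (inv_rot_of_distTriang _ hT) f ?_
  let ε := shiftFunctorCompIsoId C (1 : ℤ) (-1) (add_neg_cancel 1)
  have hnat : ε.hom.app T.obj₁ ≫ f = f⟦(1 : ℤ)⟧'⟦(-1 : ℤ)⟧' ≫ ε.hom.app Y :=
    (ε.hom.naturality f).symm
  change (-T.mor₃⟦(-1 : ℤ)⟧' ≫ ε.hom.app T.obj₁) ≫ f = 0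
  rw [Preadditive.neg_comp, assoc, hnat, ← Functor.map_comp_assoc, hf, Functor.map_zero,
    zero_comp, neg_zero]

variable {k : Type*} [CommSemiring k] [Linear k C] {τ : C ⥤ C}
  (e : ∀ A B : C, (A ⟶ (B⟦(1 : ℤ)⟧)) ≃ₗ[k] ((B ⟶ τ.obj A) →ₗ[k] k))

lemma isXEpic_mor₂_of_isXMonic_mor₁
    (he₂ : ∀ {A B B' : C} (h : B ⟶ B') (φ : A ⟶ (B⟦(1 : ℤ)⟧)) (g : B' ⟶ τ.obj A),
      e A B' (φ ≫ (h⟦(1 : ℤ)⟧')) g = e A B φ (h ≫ g))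
    {X : Set C} (hτ : ∀ X' ∈ X, τ.obj X' ∈ X) {T : Triangle C} (hT : T ∈ distTriang C)
    (h₁ : IsXMonic X T.mor₁) : IsXEpic X T.mor₂ := by
  intro X' hX' g
  have hg : g ≫ T.mor₃ = 0 := eq_zero_of_comp_shift_map_eq_zero e he₂
    (by rw [assoc, comp_distTriang_mor_zero₃₁ _ hT, comp_zero]) (h₁ (hτ X' hX'))
  obtain ⟨h, hh⟩ := Triangle.coyoneda_exact₃ _ hT g hg
  exact ⟨h, hh.symm⟩

lemma isXMonic_mor₁_of_isXEpic_mor₂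
    (he₁ : ∀ {A' A B : C} (f : A' ⟶ A) (φ : A ⟶ (B⟦(1 : ℤ)⟧)) (g : B ⟶ τ.obj A'),
      e A' B (f ≫ φ) g = e A B φ (g ≫ τ.map f))
    [τ.Full] {X : Set C} (hτ : ∀ X' ∈ X, ∃ Y ∈ X, Nonempty (τ.obj Y ≅ X'))
    {T : Triangle C} (hT : T ∈ distTriang C) (h₂ : IsXEpic X T.mor₂) :
    IsXMonic X T.mor₁ := by
  intro X' hX' g
  have hg : T.mor₃ ≫ g⟦(1 : ℤ)⟧' = 0 := eq_zero_of_comp_eq_zero e he₁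
    (by rw [← assoc, comp_distTriang_mor_zero₂₃ _ hT, zero_comp]) (h₂.map τ hτ hX')
  obtain ⟨h, hh⟩ := Triangle.yoneda_exact₁ T hT g hg
  exact ⟨h, hh.symm⟩

end Triangulated

/-- in a `k`-linear Hom-finite triangulated category with
Auslander–Reiten (Serre) duality, if `X` is functorially finite and `τX = X`,
then `(C, C)` is an `X`-mutation pair. -/
theorem statement11 [Preadditive C] [HasZeroObject C] [HasShift C ℤ]
    [∀ n : ℤ, (shiftFunctor C n).Additive] [Pretriangulated C] [HasBinaryBiproducts C]
    (k : Type*) [Field k] [CategoryTheory.Linear k C]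
    [∀ A B : C, FiniteDimensional k (A ⟶ B)]
    (τ : C ⥤ C) [τ.Additive] [τ.IsEquivalence]
    (e : ∀ A B : C, (A ⟶ (B⟦(1 : ℤ)⟧)) ≃ₗ[k] ((B ⟶ τ.obj A) →ₗ[k] k))
    (he₁ : ∀ {A' A B : C} (f : A' ⟶ A) (φ : A ⟶ (B⟦(1 : ℤ)⟧)) (g : B ⟶ τ.obj A'),
      e A' B (f ≫ φ) g = e A B φ (g ≫ τ.map f))
    (he₂ : ∀ {A B B' : C} (h : B ⟶ B') (φ : A ⟶ (B⟦(1 : ℤ)⟧)) (g : B' ⟶ τ.obj A),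
      e A B' (φ ≫ (h⟦(1 : ℤ)⟧')) g = e A B φ (h ≫ g))
    (X : Set C) (hX : IsAdditiveClosedSubcat X)
    (hcov : ∀ A : C, ∃ (X₀ : C) (α : A ⟶ X₀), IsLeftApprox X α)
    (hcontra : ∀ B : C, ∃ (X₀ : C) (β : X₀ ⟶ B), IsRightApprox X β)
    (hτ₁ : ∀ X' ∈ X, τ.obj X' ∈ X)
    (hτ₂ : ∀ X' ∈ X, ∃ Y ∈ X, Nonempty (τ.obj Y ≅ X')) :
    IsMutationPair X Set.univ Set.univ := by
  refine ⟨fun _ _ => trivial, fun _ _ => trivial, fun A _ => ?_, fun B _ => ?_⟩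
  · obtain ⟨X₀, α, hX₀, hα⟩ := hcov A
    obtain ⟨B, β, δ, hT⟩ := distinguished_cocone_triangle α
    exact ⟨X₀, B, α, β, δ, trivial, hT, ⟨hX₀, hα⟩, hX₀,
      isXEpic_mor₂_of_isXMonic_mor₁ e he₂ hτ₁ hT hα⟩
  · obtain ⟨X₀, β, hX₀, hβ⟩ := hcontra B
    obtain ⟨A, α, δ, hT⟩ := distinguished_cocone_triangle₁ β
    exact ⟨A, X₀, α, β, δ, trivial, hT, ⟨hX₀, isXMonic_mor₁_of_isXEpic_mor₂ e he₁ hτ₂ hT hβ⟩,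
      hX₀, hβ⟩

end PaperStmt
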